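/- Let H be a Hilbert space over 𝕜 (𝕜 = ℝ or ℂ), A a positive bounded linear operator on H, and T a bounded linear operator on H admitting an A-adjoint (i.e., range(T* ∘ A) ⊆ range(A), where T* is the Hilbert adjoint). Then T preserves A-orthogonality at every x ∈ closure(range A) if and only if T is a scalar multiple of an A-isometry, i.e., there exists k ≥ 0 such that ‖Tx‖_A = k‖x‖_A for all x ∈ H. -/

import Mathlib

open ContinuousLinearMap

variable {𝕜 H : Type*}

/-- The semi-norm induced by the positive operator `A`: `‖x‖_A = √(re ⟪A x, x⟫)`. -/
noncomputable def seminormA [RCLike 𝕜] [NormedAddCommGroup H] [InnerProductSpace 𝕜 H]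
    (A : H →L[𝕜] H) (x : H) : ℝ :=
  Real.sqrt (RCLike.re (inner 𝕜 (A x) x : 𝕜))

/-- The semi-inner product induced by `A`: `⟨x, y⟩_A = ⟪A x, y⟫`. -/
noncomputable def ipA [RCLike 𝕜] [NormedAddCommGroup H] [InnerProductSpace 𝕜 H]
    (A : H →L[𝕜] H) (x y : H) : 𝕜 :=
  inner 𝕜 (A x) y

/-- `T` is `A`-bounded. -/
def ABounded [RCLike 𝕜] [NormedAddCommGroup H] [InnerProductSpace 𝕜 H]
    (A T : H →L[𝕜] H) : Prop :=
  ∃ c : ℝ, 0 < c ∧ ∀ z : H, seminormA A (T z) ≤ c * seminormA A z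

/-- `T` preserves `A`-orthogonality at `x`. -/
def PreservesAOrthAt [RCLike 𝕜] [NormedAddCommGroup H] [InnerProductSpace 𝕜 H]
    (A T : H →L[𝕜] H) (x : H) : Prop :=
  ∀ y : H, ipA A x y = 0 → ipA A (T x) (T y) = 0

/-- `‖T‖_A`, the `A`-operator seminorm. -/
noncomputable def opNormA [RCLike 𝕜] [NormedAddCommGroup H] [InnerProductSpace 𝕜 H]
    (A T : H →L[𝕜] H) : ℝ :=
  sSup ((fun u => seminormA A (T u)) '' {u : H | seminormA A u = 1})

/-- `m_A(T)`, the minimum `A`-norm of `T`. -/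
noncomputable def minNormA [RCLike 𝕜] [NormedAddCommGroup H] [InnerProductSpace 𝕜 H]
    (A T : H →L[𝕜] H) : ℝ :=
  sInf ((fun u => seminormA A (T u)) '' {u : H | seminormA A u = 1})

section Aux

variable [RCLike 𝕜] [NormedAddCommGroup H] [InnerProductSpace 𝕜 H] [CompleteSpace H]

local notation "⟪" x ", " y "⟫" => @inner 𝕜 _ _ x y

private lemma selfadj_inner (A : H →L[𝕜] H) (hA : A.IsPositive) (u v : H) :
    ⟪A u, v⟫ = ⟪u, A v⟫ := by
  conv_lhs => rw [← hA.isSelfAdjoint.adjoint_eq]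
  exact ContinuousLinearMap.adjoint_inner_left A v u

private lemma ipA_conj (A : H →L[𝕜] H) (hA : A.IsPositive) (x y : H) :
    ipA A y x = starRingEnd 𝕜 (ipA A x y) := by
  rw [ipA, ipA, selfadj_inner A hA, ← inner_conj_symm]

private lemma re_ipA_nonneg (A : H →L[𝕜] H) (hA : A.IsPositive) (x : H) :
    0 ≤ RCLike.re (ipA A x x) := hA.2 x

private lemma sq_seminormA (A : H →L[𝕜] H) (hA : A.IsPositive) (x : H) :
    seminormA A x ^ 2 = RCLike.re (ipA A x x) :=
  Real.sq_sqrt (re_ipA_nonneg A hA x)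

private lemma seminormA_def (A : H →L[𝕜] H) (x : H) :
    seminormA A x = Real.sqrt (RCLike.re (ipA A x x)) := rfl

private lemma seminormA_eq_of_re (A : H →L[𝕜] H) {x y : H}
    (h : RCLike.re (ipA A x x) = RCLike.re (ipA A y y)) :
    seminormA A x = seminormA A y := by
  rw [seminormA_def, seminormA_def, h]

private lemma im_ipA_self (A : H →L[𝕜] H) (hA : A.IsPositive) (x : H) :
    RCLike.im (ipA A x x) = 0 := by
  rw [← RCLike.conj_eq_iff_im, ← ipA_conj A hA]

private lemma seminormA_smul (A : H →L[𝕜] H) (c : 𝕜) (x : H) :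
    seminormA A (c • x) = ‖c‖ * seminormA A x := by
  have h1 : (⟪A (c • x), c • x⟫ : 𝕜) = ((‖c‖ ^ 2 : ℝ) : 𝕜) * ⟪A x, x⟫ := by
    rw [map_smul, inner_smul_left, inner_smul_right, ← mul_assoc, RCLike.conj_mul]
    norm_cast
  rw [seminormA, seminormA, h1, RCLike.re_ofReal_mul, Real.sqrt_mul (sq_nonneg _),
    Real.sqrt_sq (norm_nonneg c)]

private lemma seminormA_zero (A : H →L[𝕜] H) : seminormA A (0 : H) = 0 := by
  simp [seminormA]

private lemma ipA_T_ker (A T : H →L[𝕜] H) (hA : A.IsPositive)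
    (hT : Set.range (fun y => ContinuousLinearMap.adjoint T (A y)) ⊆ Set.range (A : H → H))
    {z₀ : H} (hz : A z₀ = 0) (u : H) :
    (⟪A u, T z₀⟫ : 𝕜) = 0 := by
  obtain ⟨w, hw⟩ := hT ⟨u, rfl⟩
  calc (⟪A u, T z₀⟫ : 𝕜)
      = ⟪ContinuousLinearMap.adjoint T (A u), z₀⟫ :=
        (ContinuousLinearMap.adjoint_inner_left T z₀ (A u)).symm
    _ = ⟪A w, z₀⟫ := by rw [hw]
    _ = ⟪w, A z₀⟫ := selfadj_inner A hA w z₀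
    _ = 0 := by rw [hz, inner_zero_right]

private lemma split_lemma (A T : H →L[𝕜] H) (hA : A.IsPositive)
    (hT : Set.range (fun y => ContinuousLinearMap.adjoint T (A y)) ⊆ Set.range (A : H → H))
    (z : H) :
    ∃ z₁ ∈ closure (Set.range (A : H → H)),
      seminormA A z = seminormA A z₁ ∧ seminormA A (T z) = seminormA A (T z₁) := by
  set K := (LinearMap.range (A : H →ₗ[𝕜] H)).topologicalClosure with hK
  have hKcoe : (K : Set H) = closure (Set.range (A : H → H)) := by
    rw [hK, Submodule.topologicalClosure_coe, LinearMap.coe_range,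
      ContinuousLinearMap.coe_coe]
  haveI : CompleteSpace K :=
    (LinearMap.range (A : H →ₗ[𝕜] H)).isClosed_topologicalClosure.completeSpace_coe
  obtain ⟨z₁, hz₁, z₀, hz₀, hsum⟩ := K.exists_add_mem_mem_orthogonal z
  have hz0 : A z₀ = 0 := by
    have h : ∀ w : H, ⟪w, A z₀⟫ = 0 := by
      intro w
      rw [← selfadj_inner A hA]
      exact hz₀ (A w) (Submodule.le_topologicalClosure _ (LinearMap.mem_range.2 ⟨w, rfl⟩))
    have := h (A z₀)
    rwa [inner_self_eq_zero] at this
  have hc1 : ∀ u : H, (⟪A z₀, u⟫ : 𝕜) = 0 := by intro u; rw [hz0, inner_zero_left]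
  have hc2 : ∀ u : H, (⟪A u, z₀⟫ : 𝕜) = 0 := by
    intro u; rw [selfadj_inner A hA, hz0, inner_zero_right]
  have hc3 : ∀ u : H, (⟪A u, T z₀⟫ : 𝕜) = 0 := ipA_T_ker A T hA hT hz0
  have hc4 : ∀ u : H, (⟪A (T z₀), u⟫ : 𝕜) = 0 := by
    intro u
    have := ipA_conj A hA u (T z₀)
    rw [ipA, ipA, hc3 u, map_zero] at this
    exact this
  refine ⟨z₁, hKcoe ▸ hz₁, ?_, ?_⟩
  · apply seminormA_eq_of_re
    have h : (⟪A z, z⟫ : 𝕜) = ⟪A z₁, z₁⟫ := by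
      rw [hsum]
      simp [map_add, inner_add_left, inner_add_right, hc1, hc2]
    rw [ipA, ipA, h]
  · apply seminormA_eq_of_re
    have h : (⟪A (T z), T z⟫ : 𝕜) = ⟪A (T z₁), T z₁⟫ := by
      rw [hsum]
      simp [map_add, inner_add_left, inner_add_right, hc3, hc4]
    rw [ipA, ipA, h]

private lemma mem_closure_smul (A : H →L[𝕜] H) (c : 𝕜) {x : H}
    (hx : x ∈ closure (Set.range (A : H → H))) :
    c • x ∈ closure (Set.range (A : H → H)) := by
  set K := (LinearMap.range (A : H →ₗ[𝕜] H)).topologicalClosure with hK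
  have hKcoe : (K : Set H) = closure (Set.range (A : H → H)) := by
    rw [hK, Submodule.topologicalClosure_coe, LinearMap.coe_range,
      ContinuousLinearMap.coe_coe]
  rw [← hKcoe] at hx ⊢
  exact K.smul_mem c hx

private lemma mem_closure_add (A : H →L[𝕜] H) {x y : H}
    (hx : x ∈ closure (Set.range (A : H → H)))
    (hy : y ∈ closure (Set.range (A : H → H))) :
    x + y ∈ closure (Set.range (A : H → H)) := by
  set K := (LinearMap.range (A : H →ₗ[𝕜] H)).topologicalClosure with hK
  have hKcoe : (K : Set H) = closure (Set.range (A : H → H)) := by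
    rw [hK, Submodule.topologicalClosure_coe, LinearMap.coe_range,
      ContinuousLinearMap.coe_coe]
  rw [← hKcoe] at hx hy ⊢
  exact K.add_mem hx hy

/-- Equal `A`-norm vectors in the closure of the range of `A` have equal image norms. -/
private lemma norm_eq_imp (A T : H →L[𝕜] H) (hA : A.IsPositive)
    (hpres : ∀ x ∈ closure (Set.range (A : H → H)), PreservesAOrthAt A T x)
    {x y : H} (hx : x ∈ closure (Set.range (A : H → H)))
    (hy : y ∈ closure (Set.range (A : H → H)))
    (hxy : seminormA A x = seminormA A y) :
    seminormA A (T x) = seminormA A (T y) := by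
  set a : 𝕜 := ipA A x y with ha
  set θ : 𝕜 := if a = 0 then 1 else (starRingEnd 𝕜 a) * ((‖a‖ : 𝕜))⁻¹ with hθdef
  have hθ : ‖θ‖ = 1 := by
    rw [hθdef]
    split_ifs with h
    · simp
    · rw [norm_mul, norm_inv, RCLike.norm_conj, RCLike.norm_ofReal, abs_of_nonneg (norm_nonneg a)]
      field_simp [norm_ne_zero_iff.2 h]
  have hθa : θ * a = ((‖a‖ : ℝ) : 𝕜) := by
    rw [hθdef]
    split_ifs with h
    · simp [h]
    · have hna : (‖a‖ : ℝ) ≠ 0 := norm_ne_zero_iff.2 h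
      rw [mul_assoc, mul_comm ((‖a‖ : 𝕜))⁻¹ a, ← mul_assoc, RCLike.conj_mul]
      rw [show ((‖a‖ : ℝ) : 𝕜) ^ 2 = ((‖a‖ : ℝ) : 𝕜) * ((‖a‖ : ℝ) : 𝕜) from sq _]
      rw [mul_assoc]
      rw [mul_inv_cancel₀ (by exact_mod_cast hna), mul_one]
  set y' := θ • y with hy'
  have h1 : ipA A x y' = ((‖a‖ : ℝ) : 𝕜) := by
    rw [hy', ipA, inner_smul_right, ← ipA, ← ha, hθa]
  have h2 : ipA A y' x = ((‖a‖ : ℝ) : 𝕜) := by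
    rw [ipA_conj A hA, h1, RCLike.conj_ofReal]
  have hθc : (starRingEnd 𝕜 θ) * θ = 1 := by
    rw [RCLike.conj_mul, hθ]; norm_num
  have h3 : ipA A y' y' = ipA A y y := by
    rw [hy', ipA, map_smul, inner_smul_left, inner_smul_right, ← mul_assoc, hθc, one_mul, ipA]
  have hTy' : ipA A (T y') (T y') = ipA A (T y) (T y) := by
    rw [hy', map_smul, ipA, map_smul, inner_smul_left, inner_smul_right, ← mul_assoc, hθc,
      one_mul, ipA]
  have hxxyy : ipA A x x = ipA A y y := by
    apply RCLike.ext
    · rw [← sq_seminormA A hA, ← sq_seminormA A hA, hxy]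
    · rw [im_ipA_self A hA, im_ipA_self A hA]
  have horth : ipA A (x + y') (x - y') = 0 := by
    have hexp : ipA A (x + y') (x - y') =
        ipA A x x - ipA A x y' + ipA A y' x - ipA A y' y' := by
      simp only [ipA, map_add, inner_add_left, inner_sub_right]
      ring
    rw [hexp, h1, h2, h3, hxxyy]
    ring
  have hmem : x + y' ∈ closure (Set.range (A : H → H)) :=
    mem_closure_add A hx (mem_closure_smul A θ hy)
  have h0 := hpres (x + y') hmem (x - y') horth
  have hexp : ipA A (T (x + y')) (T (x - y')) =
      ipA A (T x) (T x) - ipA A (T x) (T y') + ipA A (T y') (T x) - ipA A (T y') (T y') := by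
    simp only [ipA, map_add, map_sub, inner_add_left, inner_sub_right, inner_sub_left,
      inner_add_right]
    ring
  rw [hexp] at h0
  have hcross : RCLike.re (ipA A (T y') (T x)) = RCLike.re (ipA A (T x) (T y')) := by
    rw [ipA_conj A hA, RCLike.conj_re]
  have hre := congrArg RCLike.re h0
  simp only [map_add, map_sub, map_zero] at hre
  have hkey : RCLike.re (ipA A (T x) (T x)) = RCLike.re (ipA A (T y') (T y')) := by
    linarith [hcross, hre]
  apply seminormA_eq_of_re
  rw [hkey, hTy']

end Aux

theorem statement16 [RCLike 𝕜] [NormedAddCommGroup H] [InnerProductSpace 𝕜 H] [CompleteSpace H]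
    (A T : H →L[𝕜] H) (hA : A.IsPositive)
    (hT : Set.range (fun y => ContinuousLinearMap.adjoint T (A y)) ⊆ Set.range (A : H → H)) :
    (∀ x ∈ closure (Set.range (A : H → H)), PreservesAOrthAt A T x) ↔
      ∃ k : ℝ, 0 ≤ k ∧ ∀ z : H, seminormA A (T z) = k * seminormA A z := by
  constructor
  · intro hpres
    by_cases hex : ∃ u ∈ closure (Set.range (A : H → H)), seminormA A u ≠ 0
    · obtain ⟨u, huM, hu⟩ := hex
      have hc : 0 < seminormA A u :=
        lt_of_le_of_ne (Real.sqrt_nonneg _) (Ne.symm hu)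
      set u' : H := (((seminormA A u)⁻¹ : ℝ) : 𝕜) • u with hu'
      have hu'M : u' ∈ closure (Set.range (A : H → H)) := mem_closure_smul A _ huM
      have hu'1 : seminormA A u' = 1 := by
        rw [hu', seminormA_smul, RCLike.norm_ofReal, abs_of_nonneg (inv_nonneg.2 hc.le)]
        field_simp
      refine ⟨seminormA A (T u'), Real.sqrt_nonneg _, fun z => ?_⟩
      obtain ⟨z₁, hz₁M, hzn, hTzn⟩ := split_lemma A T hA hT z
      have hyM : (((seminormA A z₁ : ℝ) : 𝕜) • u') ∈ closure (Set.range (A : H → H)) :=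
        mem_closure_smul A _ hu'M
      have hyn : seminormA A (((seminormA A z₁ : ℝ) : 𝕜) • u') = seminormA A z₁ := by
        rw [seminormA_smul, hu'1, mul_one, RCLike.norm_ofReal,
          abs_of_nonneg (show (0:ℝ) ≤ seminormA A z₁ from Real.sqrt_nonneg _)]
      have hmain := norm_eq_imp A T hA hpres hz₁M hyM hyn.symm
      rw [map_smul, seminormA_smul, RCLike.norm_ofReal,
        abs_of_nonneg (show (0:ℝ) ≤ seminormA A z₁ from Real.sqrt_nonneg _)] at hmain
      rw [hTzn, hmain, hzn]
      ring
    · push_neg at hex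
      refine ⟨0, le_refl _, fun z => ?_⟩
      obtain ⟨z₁, hz₁M, hzn, hTzn⟩ := split_lemma A T hA hT z
      have h0M : (0 : H) ∈ closure (Set.range (A : H → H)) :=
        subset_closure ⟨0, map_zero A⟩
      have h := norm_eq_imp A T hA hpres hz₁M h0M
        (by rw [hex z₁ hz₁M, seminormA_zero])
      rw [map_zero, seminormA_zero] at h
      rw [hTzn, h, zero_mul]
  · rintro ⟨k, hk, hnorm⟩
    intro x _ y hxy
    have hsq : ∀ z : H, RCLike.re (ipA A (T z) (T z)) = k ^ 2 * RCLike.re (ipA A z z) := by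
      intro z
      rw [← sq_seminormA A hA, ← sq_seminormA A hA, hnorm]
      ring
    have hfull : ∀ z : H, ipA A (T z) (T z) = ((k ^ 2 : ℝ) : 𝕜) * ipA A z z := by
      intro z
      apply RCLike.ext
      · rw [hsq, RCLike.re_ofReal_mul]
      · rw [im_ipA_self A hA, RCLike.im_ofReal_mul, im_ipA_self A hA, mul_zero]
    have hB : ∀ u v : H, ipA A (T u) (T v) = ((k ^ 2 : ℝ) : 𝕜) * ipA A u v := by
      intro u v
      have hRe : ∀ u v : H,
          RCLike.re (ipA A (T u) (T v) - ((k ^ 2 : ℝ) : 𝕜) * ipA A u v) = 0 := by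
        intro u v
        have hadd := hfull (u + v)
        have hu := hfull u
        have hv := hfull v
        have hexp1 : ipA A (T (u + v)) (T (u + v)) =
            ipA A (T u) (T u) + ipA A (T u) (T v) + ipA A (T v) (T u) + ipA A (T v) (T v) := by
          simp only [ipA, map_add, inner_add_left, inner_add_right]
          ring
        have hexp2 : ipA A (u + v) (u + v) =
            ipA A u u + ipA A u v + ipA A v u + ipA A v v := by
          simp only [ipA, map_add, inner_add_left, inner_add_right]
          ring
        rw [hexp1, hexp2] at hadd
        have hcross : ipA A (T u) (T v) + ipA A (T v) (T u) =
            ((k ^ 2 : ℝ) : 𝕜) * (ipA A u v + ipA A v u) := by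
          have := hadd
          rw [hu, hv] at this
          ring_nf at this ⊢
          linear_combination this
        have hconj1 : ipA A (T v) (T u) = starRingEnd 𝕜 (ipA A (T u) (T v)) :=
          ipA_conj A hA _ _
        have hconj2 : ipA A v u = starRingEnd 𝕜 (ipA A u v) := ipA_conj A hA _ _
        rw [hconj1, hconj2] at hcross
        have := congrArg RCLike.re hcross
        simp only [map_add, map_sub, RCLike.conj_re, RCLike.re_ofReal_mul] at this
        simp only [map_sub, RCLike.re_ofReal_mul]
        linarith
      have hre := hRe u v
      have him := hRe u ((RCLike.I : 𝕜) • v)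
      have hiv1 : ipA A (T u) (T ((RCLike.I : 𝕜) • v)) =
          (RCLike.I : 𝕜) * ipA A (T u) (T v) := by
        rw [map_smul, ipA, inner_smul_right, ipA]
      have hiv2 : ipA A u ((RCLike.I : 𝕜) • v) = (RCLike.I : 𝕜) * ipA A u v := by
        rw [ipA, inner_smul_right, ipA]
      rw [hiv1, hiv2] at him
      have him' : RCLike.re ((RCLike.I : 𝕜) *
          (ipA A (T u) (T v) - ((k ^ 2 : ℝ) : 𝕜) * ipA A u v)) = 0 := by
        have hring : (RCLike.I : 𝕜) * (ipA A (T u) (T v) - ((k ^ 2 : ℝ) : 𝕜) * ipA A u v) =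
            (RCLike.I : 𝕜) * ipA A (T u) (T v) -
              ((k ^ 2 : ℝ) : 𝕜) * ((RCLike.I : 𝕜) * ipA A u v) := by ring
        rw [hring]
        exact him
      rw [RCLike.I_mul_re] at him'
      have him'' : RCLike.im (ipA A (T u) (T v) - ((k ^ 2 : ℝ) : 𝕜) * ipA A u v) = 0 :=
        neg_eq_zero.mp him'
      have : ipA A (T u) (T v) - ((k ^ 2 : ℝ) : 𝕜) * ipA A u v = 0 := by
        apply RCLike.ext
        · rw [map_zero]; exact hre
        · rw [map_zero]; exact him''
      exact sub_eq_zero.mp this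
    have := hB x y
    rw [hxy, mul_zero] at this
    exact this
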